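/- arXiv:2505.09710 — 8 statements merged into one kernel-verified Lean document; each statement's English description precedes it below -/
import Mathlib

section
/- Any function y : ℝ^d → ℝ computed by a network composed solely of max-plus and min-plus morphological perceptron units is Lipschitz continuous on ℝ^d, and for almost every x ∈ ℝ^d, the gradient ∇y(x) is either the zero vector or a standard basis vector e_i for some index i (possibly depending on x). -/
/-!
Each unit takes a max or min of a bias and translates of its inputs, so by induction every
output lies in the lattice (for pointwise max and min) generated by the affine functions
`x ↦ c` and `x ↦ x i + c`, and only finitely many generators are involved. Lattice combinations
of 1-Lipschitz functions are 1-Lipschitz. Two distinct generators agree at most on a hyperplane,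
a null set; away from these finitely many hyperplanes the generators take pairwise distinct
values, so by continuity the output coincides near `x` with a single generator, whose gradient
is `0` or some `e_i`.
-/

open MeasureTheory

/-- A layered network composed solely of max-plus and min-plus morphological perceptron
units. Each unit of a layer is either a max-plus unit `x ↦ max(w₀, max_j (x_j + w_j))`
(when `isMax i = true`) or a min-plus unit `x ↦ min(m₀, min_j (x_j + m_j))`
(when `isMax i = false`); `w i none` is the bias of unit `i`. -/
inductive MPNet (d : ℕ) : ℕ → Type where
  | input : MPNet d d
  | layer {m k : ℕ} (prev : MPNet d (m + 1)) (isMax : Fin k → Bool)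
      (w : Fin k → Option (Fin (m + 1)) → ℝ) : MPNet d k

/-- The function computed by a morphological network. -/
noncomputable def MPNet.eval {d : ℕ} : {m : ℕ} → MPNet d m → (Fin d → ℝ) → Fin m → ℝ
  | _, .input, x => x
  | _, .layer prev isMax w, x => fun i =>
      if isMax i then
        max (w i none)
          (Finset.univ.sup' Finset.univ_nonempty fun j => prev.eval x j + w i (some j))
      else
        min (w i none)
          (Finset.univ.inf' Finset.univ_nonempty fun j => prev.eval x j + w i (some j))

open Filter Topology Set

section LatticeClosure

theorem exists_finite_subset_of_mem_latticeClosure {β : Type*} [Lattice β] {S : Set β} {f : β}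
    (hf : f ∈ latticeClosure S) : ∃ T ⊆ S, T.Finite ∧ f ∈ latticeClosure T := by
  induction hf using latticeClosure_sup_inf_induction with
  | mem f hf =>
    exact ⟨{f}, singleton_subset_iff.2 hf, finite_singleton f, subset_latticeClosure rfl⟩
  | sup f _ g _ hf hg =>
    obtain ⟨T, hTS, hT, hfT⟩ := hf
    obtain ⟨T', hT'S, hT', hgT'⟩ := hg
    exact ⟨T ∪ T', union_subset hTS hT'S, hT.union hT', isSublattice_latticeClosure.supClosed
      (latticeClosure_mono subset_union_left hfT) (latticeClosure_mono subset_union_right hgT')⟩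
  | inf f _ g _ hf hg =>
    obtain ⟨T, hTS, hT, hfT⟩ := hf
    obtain ⟨T', hT'S, hT', hgT'⟩ := hg
    exact ⟨T ∪ T', union_subset hTS hT'S, hT.union hT', isSublattice_latticeClosure.infClosed
      (latticeClosure_mono subset_union_left hfT) (latticeClosure_mono subset_union_right hgT')⟩

theorem LipschitzWith.of_mem_latticeClosure {X : Type*} [PseudoEMetricSpace X] {K : NNReal}
    {S : Set (X → ℝ)} (hS : ∀ u ∈ S, LipschitzWith K u) {f : X → ℝ}
    (hf : f ∈ latticeClosure S) : LipschitzWith K f := by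
  induction hf using latticeClosure_sup_inf_induction with
  | mem f hf => exact hS f hf
  | sup f _ g _ hf hg => exact max_self K ▸ hf.max hg
  | inf f _ g _ hf hg => exact max_self K ▸ hf.min hg

variable {X α : Type*} [TopologicalSpace X] [LinearOrder α] [TopologicalSpace α]
  [OrderClosedTopology α] {u v : X → α} {x : X}

theorem ContinuousAt.sup_eventuallyEq_right (hu : ContinuousAt u x) (hv : ContinuousAt v x)
    (h : u x < v x) : u ⊔ v =ᶠ[𝓝 x] v :=
  (hu.eventually_lt hv h).mono fun _ hy => sup_eq_right.2 hy.le

theorem ContinuousAt.inf_eventuallyEq_left (hu : ContinuousAt u x) (hv : ContinuousAt v x)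
    (h : u x < v x) : u ⊓ v =ᶠ[𝓝 x] u :=
  (hu.eventually_lt hv h).mono fun _ hy => inf_eq_left.2 hy.le

theorem exists_eventuallyEq_of_mem_latticeClosure {S : Set (X → α)}
    (hS : ∀ u ∈ S, ContinuousAt u x) (hinj : S.InjOn (· x)) {f : X → α}
    (hf : f ∈ latticeClosure S) : ∃ u ∈ S, f =ᶠ[𝓝 x] u := by
  induction hf using latticeClosure_sup_inf_induction with
  | mem f hf => exact ⟨f, hf, EventuallyEq.rfl⟩
  | sup f _ g _ hf hg =>
    obtain ⟨u, hu, hfu⟩ := hf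
    obtain ⟨v, hv, hgv⟩ := hg
    rcases lt_trichotomy (u x) (v x) with h | h | h
    · exact ⟨v, hv, (hfu.sup hgv).trans ((hS u hu).sup_eventuallyEq_right (hS v hv) h)⟩
    · obtain rfl := hinj hu hv h
      exact ⟨u, hu, (hfu.sup hgv).trans (by rw [sup_idem])⟩
    · exact ⟨u, hu, (hfu.sup hgv).trans
        (sup_comm v u ▸ (hS v hv).sup_eventuallyEq_right (hS u hu) h)⟩
  | inf f _ g _ hf hg =>
    obtain ⟨u, hu, hfu⟩ := hf
    obtain ⟨v, hv, hgv⟩ := hg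
    rcases lt_trichotomy (u x) (v x) with h | h | h
    · exact ⟨u, hu, (hfu.inf hgv).trans ((hS u hu).inf_eventuallyEq_left (hS v hv) h)⟩
    · obtain rfl := hinj hu hv h
      exact ⟨u, hu, (hfu.inf hgv).trans (by rw [inf_idem])⟩
    · exact ⟨v, hv, (hfu.inf hgv).trans
        (inf_comm v u ▸ (hS v hv).inf_eventuallyEq_left (hS u hu) h)⟩

end LatticeClosure

section AffinePieces

variable {E : Type*} [NormedAddCommGroup E] [NormedSpace ℝ E]

def affinePieces (L : Set (E →L[ℝ] ℝ)) : Set (E → ℝ) :=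
  {u | ∃ ℓ ∈ L, ∃ c : ℝ, u = fun x => ℓ x + c}

variable {L : Set (E →L[ℝ] ℝ)}

theorem add_const_mem_latticeClosure_affinePieces {f : E → ℝ}
    (hf : f ∈ latticeClosure (affinePieces L)) (c : ℝ) :
    (fun x => f x + c) ∈ latticeClosure (affinePieces L) := by
  have himage := image_latticeClosure (affinePieces L) (· + Function.const E c)
    (fun u v => sup_add u v _) (fun u v => inf_add u v _)
  refine latticeClosure_mono ?_ (himage ▸ mem_image_of_mem _ hf)
  rintro _ ⟨_, ⟨ℓ, hℓ, c', rfl⟩, rfl⟩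
  exact ⟨ℓ, hℓ, c' + c, by ext; simp [add_assoc]⟩

variable [MeasurableSpace E] [BorelSpace E] [FiniteDimensional ℝ E] (μ : Measure E)
  [μ.IsAddHaarMeasure]

theorem addHaar_setOf_apply_eq {ℓ : E →L[ℝ] ℝ} (hℓ : ℓ ≠ 0) (t : ℝ) :
    μ {x | ℓ x = t} = 0 := by
  have hℓ' : (ℓ : E →ₗ[ℝ] ℝ) ≠ 0 := by
    rwa [Ne, ← ContinuousLinearMap.toLinearMap_zero, ContinuousLinearMap.coe_inj]
  obtain ⟨x₀, rfl⟩ : ∃ x₀, ℓ x₀ = t := LinearMap.surjective_of_ne_zero hℓ' t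
  have hset : {x | ℓ x = ℓ x₀} = (· + -x₀) ⁻¹' (LinearMap.ker (ℓ : E →ₗ[ℝ] ℝ)) := by
    ext x
    simp [← sub_eq_add_neg, sub_eq_zero]
  rw [hset, measure_preimage_add_right]
  exact Measure.addHaar_submodule μ _ (LinearMap.ker_eq_top.not.2 hℓ')

theorem addHaar_setOf_eq_of_mem_affinePieces {u v : E → ℝ}
    (hu : u ∈ affinePieces L) (hv : v ∈ affinePieces L) (huv : u ≠ v) :
    μ {x | u x = v x} = 0 := by
  obtain ⟨ℓ, -, c, rfl⟩ := hu
  obtain ⟨ℓ', -, c', rfl⟩ := hv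
  by_cases hℓ : ℓ = ℓ'
  · subst hℓ
    have hc : c ≠ c' := by rintro rfl; exact huv rfl
    simp [hc]
  · refine measure_mono_null (fun x hx => ?_)
      (addHaar_setOf_apply_eq μ (sub_ne_zero.2 hℓ) (c' - c))
    simp only [mem_ofPred_eq, sub_apply] at hx ⊢
    linarith

theorem ae_injOn_apply_of_subset_affinePieces {T : Set (E → ℝ)}
    (hT : T.Finite) (hTL : T ⊆ affinePieces L) : ∀ᵐ x ∂μ, T.InjOn (· x) := by
  have hpair : ∀ u ∈ T, ∀ v ∈ T, ∀ᵐ x ∂μ, u x = v x → u = v := fun u hu v hv => by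
    by_cases huv : u = v
    · exact .of_forall fun _ _ => huv
    · exact ae_iff.2 <| measure_mono_null (fun x hx => by simpa [huv] using hx)
        (addHaar_setOf_eq_of_mem_affinePieces μ (hTL hu) (hTL hv) huv)
  filter_upwards
    [(eventually_all_finite hT).2 fun u hu => (eventually_all_finite hT).2 (hpair u hu)]
    with x hx u hu v hv using hx u hu v hv

theorem ae_hasFDerivAt_of_mem_latticeClosure_affinePieces {f : E → ℝ}
    (hf : f ∈ latticeClosure (affinePieces L)) :
    ∀ᵐ x ∂μ, ∃ ℓ ∈ L, HasFDerivAt f ℓ x := by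
  obtain ⟨T, hTL, hT, hfT⟩ := exists_finite_subset_of_mem_latticeClosure hf
  filter_upwards [ae_injOn_apply_of_subset_affinePieces μ hT hTL] with x hx
  have hcont : ∀ u ∈ T, ContinuousAt u x := by
    rintro _ hu
    obtain ⟨ℓ, -, c, rfl⟩ := hTL hu
    fun_prop
  obtain ⟨u, hu, hfu⟩ := exists_eventuallyEq_of_mem_latticeClosure hcont hx hfT
  obtain ⟨ℓ, hℓ, c, rfl⟩ := hTL hu
  exact ⟨ℓ, hℓ, (ℓ.hasFDerivAt.add_const c).congr_of_eventuallyEq hfu⟩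

end AffinePieces

section MPNet

variable {d : ℕ}

def coordForms (d : ℕ) : Set ((Fin d → ℝ) →L[ℝ] ℝ) :=
  insert 0 (range fun i => ContinuousLinearMap.proj i)

theorem lipschitzWith_one_of_mem_affinePieces_coordForms {u : (Fin d → ℝ) → ℝ}
    (hu : u ∈ affinePieces (coordForms d)) : LipschitzWith 1 u := by
  obtain ⟨ℓ, rfl | ⟨i, rfl⟩, c, rfl⟩ := hu <;>
    refine LipschitzWith.of_dist_le_mul fun x y => ?_ <;>
    rw [NNReal.coe_one, one_mul, dist_add_right]
  · simp
  · exact dist_le_pi_dist x y i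

theorem MPNet.eval_mem_latticeClosure {m : ℕ} (net : MPNet d m) (i : Fin m) :
    (fun x => net.eval x i) ∈ latticeClosure (affinePieces (coordForms d)) := by
  induction net with
  | input =>
    exact subset_latticeClosure ⟨_, mem_insert_of_mem _ ⟨i, rfl⟩, 0, by ext; simp [MPNet.eval]⟩
  | layer prev isMax w ih =>
    have hbias : (fun _ => w i none) ∈ latticeClosure (affinePieces (coordForms d)) :=
      subset_latticeClosure ⟨0, mem_insert _ _, w i none, by simp⟩
    have hterm (j) := add_const_mem_latticeClosure_affinePieces (ih j) (w i (some j))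
    cases h : isMax i
    · have hinf := isSublattice_latticeClosure.infClosed.finsetInf'_mem Finset.univ_nonempty
        fun j _ => hterm j
      convert isSublattice_latticeClosure.infClosed hbias hinf using 1
      ext x
      simp [MPNet.eval, h, Finset.inf'_apply]
    · have hsup := isSublattice_latticeClosure.supClosed.finsetSup'_mem Finset.univ_nonempty
        fun j _ => hterm j
      convert isSublattice_latticeClosure.supClosed hbias hsup using 1
      ext x
      simp [MPNet.eval, h, Finset.sup'_apply]

end MPNet

/-- Any single-output function computed by a network of max-plus and min-plus morphological
perceptrons is Lipschitz on `ℝ^d`, and almost everywhere its gradient is either `0` or a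
standard basis vector `e_i`. -/
theorem mpnet_lipschitz_grad_zero_or_basis (d : ℕ) (net : MPNet d 1) :
    (∃ K : NNReal, LipschitzWith K fun x => net.eval x 0) ∧
      ∀ᵐ x ∂volume, DifferentiableAt ℝ (fun x => net.eval x 0) x ∧
        (fderiv ℝ (fun x => net.eval x 0) x = 0 ∨
          ∃ i : Fin d, ∀ v, fderiv ℝ (fun x => net.eval x 0) x v = v i) := by
  have hnet := net.eval_mem_latticeClosure 0
  refine ⟨⟨1, .of_mem_latticeClosure (fun _ => lipschitzWith_one_of_mem_affinePieces_coordForms)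
    hnet⟩, ?_⟩
  filter_upwards [ae_hasFDerivAt_of_mem_latticeClosure_affinePieces volume hnet]
    with x ⟨ℓ, hℓ, hderiv⟩
  refine ⟨hderiv.differentiableAt, ?_⟩
  rw [hderiv.fderiv]
  rcases hℓ with rfl | ⟨i, rfl⟩
  · exact Or.inl rfl
  · exact Or.inr ⟨i, fun v => rfl⟩
end

section
/- Networks composed solely of max-plus and min-plus morphological perceptrons are not universal approximators on ℝ^d: for any compact convex B ⊆ ℝ^d with nonempty interior, the class of functions computed by such networks restricted to B is not dense in C(B) under the sup-norm. -/
/-! Every unit takes a max or min of a constant and translates of the previous layer's outputs,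
so by induction every network is 1-Lipschitz for the sup-norm on `Fin d → ℝ`. The target
`x ↦ 2 x₀` stretches the distance `r / 2` between two points of a ball in `B` to `r`, so no
1-Lipschitz function is within `r / 4` of it at both points. For `d = 0` there is no network
at all: a layer cannot sit on an input layer of width zero. -/

open Finset

theorem LipschitzWith.finset_sup' {α ι : Type*} [PseudoEMetricSpace α] {K : NNReal}
    {s : Finset ι} (hs : s.Nonempty) {f : ι → α → ℝ} (hf : ∀ i ∈ s, LipschitzWith K (f i)) :
    LipschitzWith K fun x => s.sup' hs (f · x) := by
  induction hs using Finset.Nonempty.cons_induction with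
  | singleton i => simpa using hf i (mem_singleton_self i)
  | cons i s hi hs ih =>
    simp only [mem_cons, forall_eq_or_imp] at hf
    simpa only [sup'_cons hs, max_self] using hf.1.max (ih hf.2)

theorem LipschitzWith.finset_inf' {α ι : Type*} [PseudoEMetricSpace α] {K : NNReal}
    {s : Finset ι} (hs : s.Nonempty) {f : ι → α → ℝ} (hf : ∀ i ∈ s, LipschitzWith K (f i)) :
    LipschitzWith K fun x => s.inf' hs (f · x) := by
  induction hs using Finset.Nonempty.cons_induction with
  | singleton i => simpa using hf i (mem_singleton_self i)
  | cons i s hi hs ih =>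
    simp only [mem_cons, forall_eq_or_imp] at hf
    simpa only [inf'_cons hs, max_self] using hf.1.min (ih hf.2)

theorem LipschitzWith.add_const {α : Type*} [PseudoEMetricSpace α] {K : NNReal} {f : α → ℝ}
    (hf : LipschitzWith K f) (c : ℝ) : LipschitzWith K fun x => f x + c := by
  simpa only [Function.comp_def, one_mul] using (isometry_add_right c).lipschitz.comp hf

namespace MPNet

theorem lipschitzWith_eval {d : ℕ} : ∀ {m : ℕ} (net : MPNet d m) (i : Fin m),
    LipschitzWith 1 fun x => net.eval x i
  | _, .input, i => LipschitzWith.eval i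
  | _, .layer prev isMax w, i => by
    have hterm : ∀ j ∈ (univ : Finset (Fin _)),
        LipschitzWith 1 fun x => prev.eval x j + w i (some j) :=
      fun j _ => (prev.lipschitzWith_eval j).add_const _
    unfold eval
    cases isMax i
    · exact (LipschitzWith.finset_inf' univ_nonempty hterm).const_min _
    · exact (LipschitzWith.finset_sup' univ_nonempty hterm).const_max _

theorem ne_zero_of_ne_zero {d : ℕ} : ∀ {m : ℕ}, MPNet d m → m ≠ 0 → d ≠ 0
  | _, .input, hm => hm
  | _, .layer prev _ _, _ => prev.ne_zero_of_ne_zero (Nat.succ_ne_zero _)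

end MPNet

theorem LipschitzWith.le_dist_or_le_dist {α β : Type*} [PseudoMetricSpace α]
    [PseudoMetricSpace β] {K : NNReal} {f g : α → β} (hf : LipschitzWith K f) {a b : α} {ε : ℝ}
    (h : K * dist a b + 2 * ε ≤ dist (g a) (g b)) :
    ε ≤ dist (f a) (g a) ∨ ε ≤ dist (f b) (g b) := by
  by_contra! hfg
  have hfab := hf.dist_le_mul a b
  have := dist_triangle4 (g a) (f a) (f b) (g b)
  rw [dist_comm (g a) (f a)] at this
  linarith [hfg.1, hfg.2]

theorem mpnet_not_universal_general (d : ℕ) (B : Set (Fin d → ℝ))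
    (hBint : (interior B).Nonempty) :
    ∃ g : (Fin d → ℝ) → ℝ, ContinuousOn g B ∧ ∃ ε > (0 : ℝ),
      ∀ net : MPNet d 1, ∃ x ∈ B, ε ≤ |net.eval x 0 - g x| := by
  obtain rfl | hd := eq_or_ne d 0
  · exact ⟨0, continuousOn_const, 1, one_pos,
      fun net => (net.ne_zero_of_ne_zero one_ne_zero rfl).elim⟩
  obtain ⟨a, ha⟩ := hBint
  obtain ⟨r, hr, hball⟩ := Metric.isOpen_iff.mp isOpen_interior a ha
  let i : Fin d := ⟨0, Nat.pos_of_ne_zero hd⟩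
  let b := a + Pi.single i (r / 2)
  have hab : dist a b = r / 2 := by
    simp [b, dist_self_add_right, Pi.norm_single, abs_of_pos hr]
  have hbB : b ∈ B := interior_subset (hball (by rw [Metric.mem_ball, dist_comm, hab]; linarith))
  refine ⟨fun x => 2 * x i, ((continuous_apply i).const_mul 2).continuousOn, r / 4,
    by positivity, fun net => ?_⟩
  have hstretch : (1 : NNReal) * dist a b + 2 * (r / 4) ≤ dist (2 * a i) (2 * b i) := by
    have hgab : 2 * a i - 2 * b i = -r := by
      simp only [b, Pi.add_apply, Pi.single_eq_same]; ring
    rw [Real.dist_eq, hgab, abs_neg, abs_of_pos hr, hab, NNReal.coe_one]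
    linarith
  rcases (net.lipschitzWith_eval 0).le_dist_or_le_dist (g := fun x => 2 * x i) hstretch with h | h
  · exact ⟨a, interior_subset ha, by rwa [Real.dist_eq] at h⟩
  · exact ⟨b, hbB, by rwa [Real.dist_eq] at h⟩

/-- Networks composed solely of max-plus and min-plus morphological perceptrons are not
universal approximators: on any compact convex `B ⊆ ℝ^d` with nonempty interior, the class
of functions they compute is not dense in `C(B)` for the sup-norm. -/
theorem mpnet_not_universal (d : ℕ) (B : Set (Fin d → ℝ))
    (hBc : IsCompact B) (hBconv : Convex ℝ B) (hBint : (interior B).Nonempty) :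
    ∃ g : (Fin d → ℝ) → ℝ, ContinuousOn g B ∧ ∃ ε > (0 : ℝ),
      ∀ net : MPNet d 1, ∃ x ∈ B, ε ≤ |net.eval x 0 - g x| :=
  mpnet_not_universal_general d B hBint
end

section
/- Any function y : ℝ^d → ℝ computed by a non-activated DEP-based network (layers x_i^{(n)} = λ_i^{(n)} · max_j (x_j^{(n-1)} + w_{ij}^{(n)}) + (1-λ_i^{(n)}) · min_j (x_j^{(n-1)} + m_{ij}^{(n)}) with λ_i^{(n)} ∈ [0,1]) is Lipschitz continuous, and almost everywhere its gradient satisfies ∇y(x) ⪰ 0 (componentwise nonnegative) and ‖∇y(x)‖₁ = 1. -/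
open MeasureTheory

/-- A non-activated DEP-based network: each unit of a layer computes
`λ_i · max_j (x_j + w_{ij}) + (1 - λ_i) · min_j (x_j + m_{ij})` with `λ_i ∈ [0, 1]`. -/
inductive DEPNet (d : ℕ) : ℕ → Type where
  | input : DEPNet d d
  | layer {m k : ℕ} (prev : DEPNet d (m + 1)) (lam : Fin k → ℝ)
      (hlam : ∀ i, 0 ≤ lam i ∧ lam i ≤ 1)
      (w mw : Fin k → Fin (m + 1) → ℝ) : DEPNet d k

/-- The function computed by a DEP-based network. -/
noncomputable def DEPNet.eval {d : ℕ} : {k : ℕ} → DEPNet d k → (Fin d → ℝ) → Fin k → ℝ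
  | _, .input, x => x
  | _, .layer prev lam _ w mw, x => fun i =>
      lam i * (Finset.univ.sup' Finset.univ_nonempty fun j => prev.eval x j + w i j) +
        (1 - lam i) * (Finset.univ.inf' Finset.univ_nonempty fun j => prev.eval x j + mw i j)

/-! A DEP network is monotone for the componentwise order and commutes with adding a constant to
all inputs, since both properties hold for `max`, `min` and convex combinations and are preserved
under composition. Any monotone `f : ℝⁿ → ℝ` with `f (x + c) = f x + c` is `1`-Lipschitz for the
sup norm, since `x ≤ y + ‖x - y‖∞`; hence (Rademacher) differentiable almost everywhere. At such a
point monotonicity makes every partial derivative nonnegative, and differentiating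
`t ↦ f (x + t) = f x + t` shows that they sum to `1`. -/

theorem Finset.inf'_add {ι G : Type*} [AddGroup G] [LinearOrder G] [AddRightMono G]
    (s : Finset ι) (hs : s.Nonempty) (f : ι → G) (c : G) :
    s.inf' hs f + c = s.inf' hs fun i => f i + c :=
  map_finset_inf' (OrderIso.addRight c) hs f

namespace DEPNet

variable {d k : ℕ}

theorem monotone_eval (net : DEPNet d k) : Monotone net.eval := by
  induction net with
  | input => exact monotone_id
  | layer prev lam hlam w mw ih =>
    intro x y hxy i
    have hmax := Finset.sup'_mono_fun (s := Finset.univ) (hs := Finset.univ_nonempty)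
      fun j _ => add_le_add_left (ih hxy j) (w i j)
    have hmin := Finset.inf'_mono_fun (s := Finset.univ) (hs := Finset.univ_nonempty)
      fun j _ => add_le_add_left (ih hxy j) (mw i j)
    obtain ⟨hlam_nonneg, hlam_le_one⟩ := hlam i
    simp only [eval]
    gcongr

theorem eval_add_const (net : DEPNet d k) (x : Fin d → ℝ) (c : ℝ) :
    net.eval (x + fun _ => c) = net.eval x + fun _ => c := by
  induction net with
  | input => rfl
  | layer prev lam hlam w mw ih =>
    ext i
    have hshift (v : Fin _ → ℝ) :
        (fun j => prev.eval x j + c + v j) = fun j => prev.eval x j + v j + c := by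
      ext j; ring
    simp only [eval, ih, Pi.add_apply, hshift, ← Finset.sup'_add, ← Finset.inf'_add]
    ring

end DEPNet

section MonotoneAddConst

variable {ι : Type*} [Fintype ι] {f : (ι → ℝ) → ℝ}

theorem LipschitzWith.of_monotone_of_map_add_const (hmono : Monotone f)
    (hadd : ∀ x c, f (x + fun _ => c) = f x + c) : LipschitzWith 1 f :=
  LipschitzWith.of_le_add fun x y => by
    have hle : x ≤ y + fun _ => dist x y := fun i => by
      have := (Real.sub_le_dist (x i) (y i)).trans (dist_le_pi_dist x y i)
      simp only [Pi.add_apply]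
      linarith
    exact (hmono hle).trans_eq (hadd y _)

theorem DifferentiableAt.fderiv_apply_eq_deriv_comp_add_smul {𝕜 E F : Type*}
    [NontriviallyNormedField 𝕜] [NormedAddCommGroup E] [NormedSpace 𝕜 E] [NormedAddCommGroup F]
    [NormedSpace 𝕜 F] {g : E → F} {x : E} (hg : DifferentiableAt 𝕜 g x) (v : E) :
    fderiv 𝕜 g x v = deriv (fun t : 𝕜 => g (x + t • v)) 0 := by
  have hg' : DifferentiableAt 𝕜 g (x + (0 : 𝕜) • v) := by simpa using hg
  simpa using hg'.deriv_comp_add_smul.symm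

theorem fderiv_apply_nonneg_of_monotone (hmono : Monotone f) (x : ι → ℝ) {v : ι → ℝ}
    (hv : 0 ≤ v) (hdiff : DifferentiableAt ℝ f x) : 0 ≤ fderiv ℝ f x v := by
  have hline_mono : Monotone fun t : ℝ => f (x + t • v) := fun s t hst => hmono (by gcongr)
  rw [hdiff.fderiv_apply_eq_deriv_comp_add_smul]
  exact hline_mono.deriv_nonneg

theorem fderiv_apply_const_one_of_map_add_const (hadd : ∀ x c, f (x + fun _ => c) = f x + c)
    (x : ι → ℝ) (hdiff : DifferentiableAt ℝ f x) : fderiv ℝ f x (fun _ => 1) = 1 := by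
  have hline : (fun t : ℝ => f (x + t • fun _ => 1)) = fun t => f x + t := by
    ext t
    rw [← hadd]
    congr 2
    ext
    simp
  rw [hdiff.fderiv_apply_eq_deriv_comp_add_smul, hline]
  simp

theorem sum_abs_fderiv_single_of_monotone_of_map_add_const [DecidableEq ι] (hmono : Monotone f)
    (hadd : ∀ x c, f (x + fun _ => c) = f x + c) (x : ι → ℝ) (hdiff : DifferentiableAt ℝ f x) :
    ∑ j, |fderiv ℝ f x (Pi.single j 1)| = 1 := by
  have hnonneg j : 0 ≤ fderiv ℝ f x (Pi.single j 1) :=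
    fderiv_apply_nonneg_of_monotone hmono x (Pi.single_nonneg.mpr zero_le_one) hdiff
  calc ∑ j, |fderiv ℝ f x (Pi.single j 1)| = ∑ j, fderiv ℝ f x (Pi.single j 1) :=
        Finset.sum_congr rfl fun j _ => abs_of_nonneg (hnonneg j)
    _ = fderiv ℝ f x (fun _ => 1) := by rw [← map_sum, Finset.univ_sum_single (fun _ => (1 : ℝ))]
    _ = 1 := fderiv_apply_const_one_of_map_add_const hadd x hdiff

end MonotoneAddConst

/-- Any single-output function computed by a non-activated DEP-based network is Lipschitz
on `ℝ^d`, and almost everywhere its gradient is componentwise nonnegative with ℓ¹-norm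
exactly `1`. -/
theorem depnet_lipschitz_grad_nonneg_l1_eq_one (d : ℕ) (net : DEPNet d 1) :
    (∃ K : NNReal, LipschitzWith K fun x => net.eval x 0) ∧
      ∀ᵐ x ∂volume, DifferentiableAt ℝ (fun x => net.eval x 0) x ∧
        (∀ j, 0 ≤ fderiv ℝ (fun x => net.eval x 0) x (Pi.single j 1)) ∧
        ∑ j, |fderiv ℝ (fun x => net.eval x 0) x (Pi.single j 1)| = 1 := by
  have hmono : Monotone fun x => net.eval x 0 := fun _ _ h => net.monotone_eval h 0
  have hadd x c : net.eval (x + fun _ => c) 0 = net.eval x 0 + c :=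
    congrFun (net.eval_add_const x c) 0
  have hlip := LipschitzWith.of_monotone_of_map_add_const hmono hadd
  refine ⟨⟨1, hlip⟩, ?_⟩
  filter_upwards [hlip.ae_differentiableAt] with x hdiff
  exact ⟨hdiff, fun j => fderiv_apply_nonneg_of_monotone hmono x
      (Pi.single_nonneg.mpr zero_le_one) hdiff,
    sum_abs_fderiv_single_of_monotone_of_map_add_const hmono hadd x hdiff⟩
end

section
/- For an activated DEP-based network with L layers of which L̃ layers are activated by a common activation function f satisfying 0 ≤ f' ≤ s ≤ 1 almost everywhere, with input x ∈ ℝ^d and single output y(x), the function y is Lipschitz continuous on ℝ^d and almost everywhere ∇y(x) ⪰ 0 and ‖∇y(x)‖₁ ≤ s^{L̃} ≤ 1. -/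
/-!
Every unit of the network is monotone in its input and, when all input coordinates are
raised by `c ≥ 0`, increases by at most `K * c`, where `K = s ^ L̃`: `max`, `min`, adding
constants and convex combinations preserve both properties with the same `K`, and an
activation, being monotone (its derivative is a.e. nonnegative and it is absolutely
continuous) and `s`-Lipschitz, multiplies `K` by `s`. These two properties give the
Lipschitz bound in the sup metric, and at points of differentiability they say that the
directional derivatives along nonnegative vectors are nonnegative while the one along
`(1, …, 1)`, which equals the ℓ¹-norm of the gradient, is at most `K`.
-/

open MeasureTheory

/-- A DEP-based network in which each layer may additionally be activated (flag `act`)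
by a common activation function. Each unit computes
`λ_i · max_j (x_j + w_{ij}) + (1 - λ_i) · min_j (x_j + m_{ij})` with `λ_i ∈ [0, 1]`,
optionally followed by the activation. -/
inductive ADEPNet (d : ℕ) : ℕ → Type where
  | input : ADEPNet d d
  | layer {m k : ℕ} (prev : ADEPNet d (m + 1)) (act : Bool) (lam : Fin k → ℝ)
      (hlam : ∀ i, 0 ≤ lam i ∧ lam i ≤ 1)
      (w mw : Fin k → Fin (m + 1) → ℝ) : ADEPNet d k

/-- The function computed by an activated DEP-based network, with activation `f`. -/
noncomputable def ADEPNet.eval {d : ℕ} (f : ℝ → ℝ) :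
    {k : ℕ} → ADEPNet d k → (Fin d → ℝ) → Fin k → ℝ
  | _, .input, x => x
  | _, .layer prev act lam _ w mw, x => fun i =>
      let z :=
        lam i * (Finset.univ.sup' Finset.univ_nonempty fun j => prev.eval f x j + w i j) +
          (1 - lam i) *
            (Finset.univ.inf' Finset.univ_nonempty fun j => prev.eval f x j + mw i j)
      if act then f z else z

/-- The number `L̃` of activated layers of the network. -/
def ADEPNet.countAct {d : ℕ} : {k : ℕ} → ADEPNet d k → ℕ
  | _, .input => 0
  | _, .layer prev act _ _ _ _ => prev.countAct + (if act then 1 else 0)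

theorem LipschitzWith.monotone_of_ae_deriv_nonneg {f : ℝ → ℝ} {K : NNReal}
    (hf : LipschitzWith K f) (hderiv : ∀ᵐ t, 0 ≤ deriv f t) : Monotone f := by
  intro a b hab
  have hftc : ∫ t in a..b, deriv f t = f b - f a :=
    (hf.lipschitzOnWith (s := Set.uIcc a b)).absolutelyContinuousOnInterval.integral_deriv_eq_sub
  have : 0 ≤ ∫ t in a..b, deriv f t := intervalIntegral.integral_nonneg_of_ae hab hderiv
  linarith

structure MonotoneShiftBounded {ι : Type*} (K : ℝ) (g : (ι → ℝ) → ℝ) : Prop where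
  monotone : Monotone g
  shift_le : ∀ x (c : ℝ), 0 ≤ c → g (x + c • 1) ≤ g x + K * c

namespace MonotoneShiftBounded

variable {ι : Type*} {K : ℝ} {g h : (ι → ℝ) → ℝ}

theorem _root_.monotoneShiftBounded_apply (j : ι) : MonotoneShiftBounded 1 fun x : ι → ℝ => x j where
  monotone _ _ hxy := hxy j
  shift_le x c _ := by simp

theorem add_const (hg : MonotoneShiftBounded K g) (w : ℝ) :
    MonotoneShiftBounded K fun x => g x + w where
  monotone _ _ hxy := by simpa using hg.monotone hxy
  shift_le x c hc := by linarith [hg.shift_le x c hc]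

theorem sup' {α : Type*} {s : Finset α} (hs : s.Nonempty) {g : α → (ι → ℝ) → ℝ}
    (hg : ∀ a ∈ s, MonotoneShiftBounded K (g a)) :
    MonotoneShiftBounded K fun x => s.sup' hs fun a => g a x where
  monotone _ _ hxy := Finset.sup'_mono_fun fun a ha => (hg a ha).monotone hxy
  shift_le x c hc := Finset.sup'_le _ _ fun a ha =>
    ((hg a ha).shift_le x c hc).trans (by gcongr; exact Finset.le_sup' (g · x) ha)

theorem inf' {α : Type*} {s : Finset α} (hs : s.Nonempty) {g : α → (ι → ℝ) → ℝ}
    (hg : ∀ a ∈ s, MonotoneShiftBounded K (g a)) :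
    MonotoneShiftBounded K fun x => s.inf' hs fun a => g a x where
  monotone _ _ hxy := Finset.inf'_mono_fun fun a ha => (hg a ha).monotone hxy
  shift_le x c hc := by
    obtain ⟨a, ha, hmin⟩ := Finset.exists_mem_eq_inf' hs (g · x)
    rw [hmin]
    exact (Finset.inf'_le _ ha).trans ((hg a ha).shift_le x c hc)

theorem convex_comb (hg : MonotoneShiftBounded K g) (hh : MonotoneShiftBounded K h) {l : ℝ}
    (hl₀ : 0 ≤ l) (hl₁ : l ≤ 1) :
    MonotoneShiftBounded K fun x => l * g x + (1 - l) * h x where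
  monotone x y hxy := by
    have := hg.monotone hxy
    have := hh.monotone hxy
    simp only
    gcongr
  shift_le x c hc := by
    have := hg.shift_le x c hc
    have := hh.shift_le x c hc
    nlinarith

theorem comp {φ : ℝ → ℝ} {L : NNReal} (hφ : Monotone φ) (hφL : LipschitzWith L φ)
    (hg : MonotoneShiftBounded K g) : MonotoneShiftBounded (L * K) fun x => φ (g x) where
  monotone := hφ.comp hg.monotone
  shift_le x c hc := by
    have hshift := hg.shift_le x c hc
    have hKc : 0 ≤ K * c := by
      linarith [hg.monotone (le_add_of_nonneg_right (smul_nonneg hc zero_le_one) : x ≤ x + c • 1)]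
    calc φ (g (x + c • 1)) ≤ φ (g x + K * c) := hφ hshift
      _ ≤ φ (g x) + L * dist (g x + K * c) (g x) := hφL.le_add_mul _ _
      _ = φ (g x) + L * K * c := by
        rw [Real.dist_eq, add_sub_cancel_left, abs_of_nonneg hKc, mul_assoc]

theorem le_add_dist [Fintype ι] (hg : MonotoneShiftBounded K g) (x y : ι → ℝ) :
    g x ≤ g y + K * dist x y := by
  have hxy : x ≤ y + dist x y • 1 := fun j => by
    have := (le_abs_self (x j - y j)).trans (dist_le_pi_dist x y j)
    simp only [Pi.add_apply, Pi.smul_apply, Pi.one_apply, smul_eq_mul, mul_one]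
    linarith
  exact (hg.monotone hxy).trans (hg.shift_le y _ dist_nonneg)

theorem lipschitzWith [Fintype ι] (hg : MonotoneShiftBounded K g) :
    LipschitzWith K.toNNReal g :=
  LipschitzWith.of_le_add_mul' K hg.le_add_dist

theorem fderiv_nonneg [Fintype ι] (hg : MonotoneShiftBounded K g) (x : ι → ℝ) {v : ι → ℝ}
    (hv : 0 ≤ v) : 0 ≤ fderiv ℝ g x v := by
  by_cases hx : DifferentiableAt ℝ g x
  · refine HasDerivAt.nonneg_of_monotone (hx.hasFDerivAt.hasLineDerivAt v)
      fun t u htu => hg.monotone ?_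
    gcongr
  · simp [fderiv_zero_of_not_differentiableAt hx]

theorem fderiv_one_le [Fintype ι] (hg : MonotoneShiftBounded K g) {x : ι → ℝ}
    (hx : DifferentiableAt ℝ g x) : fderiv ℝ g x 1 ≤ K := by
  have hanti : Antitone fun t : ℝ => g (x + t • 1) - K * t := by
    intro t u htu
    have := hg.shift_le (x + t • 1) (u - t) (sub_nonneg.2 htu)
    rw [add_assoc, ← add_smul, add_sub_cancel] at this
    dsimp only
    linarith
  have hderiv : HasDerivAt (fun t : ℝ => g (x + t • 1) - K * t) (fderiv ℝ g x 1 - K * 1) 0 :=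
    (hx.hasFDerivAt.hasLineDerivAt 1).sub ((hasDerivAt_id 0).const_mul K)
  have := hderiv.nonpos_of_antitone hanti
  linarith

theorem sum_abs_fderiv_single_le [Fintype ι] [DecidableEq ι] (hg : MonotoneShiftBounded K g)
    {x : ι → ℝ} (hx : DifferentiableAt ℝ g x) :
    ∑ j, |fderiv ℝ g x (Pi.single j 1)| ≤ K := by
  have hnonneg j : 0 ≤ fderiv ℝ g x (Pi.single j 1) :=
    hg.fderiv_nonneg x (Pi.single_nonneg.2 zero_le_one)
  calc ∑ j, |fderiv ℝ g x (Pi.single j 1)| = fderiv ℝ g x (∑ j, Pi.single j 1) := by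
        simp only [abs_of_nonneg (hnonneg _), map_sum]
    _ = fderiv ℝ g x 1 := by rw [← Finset.univ_sum_single (1 : ι → ℝ)]; rfl
    _ ≤ K := hg.fderiv_one_le hx

end MonotoneShiftBounded

theorem ADEPNet.monotoneShiftBounded_eval {d : ℕ} {f : ℝ → ℝ} {L : NNReal} (hf : Monotone f)
    (hfL : LipschitzWith L f) {k : ℕ} (net : ADEPNet d k) (i : Fin k) :
    MonotoneShiftBounded ((L : ℝ) ^ net.countAct) fun x => net.eval f x i := by
  induction net with
  | input => simpa [ADEPNet.eval, ADEPNet.countAct] using monotoneShiftBounded_apply i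
  | layer prev act lam hlam w mw ih =>
    have hz : MonotoneShiftBounded ((L : ℝ) ^ prev.countAct) fun x =>
        lam i * (Finset.univ.sup' Finset.univ_nonempty fun j => prev.eval f x j + w i j) +
          (1 - lam i) *
            (Finset.univ.inf' Finset.univ_nonempty fun j => prev.eval f x j + mw i j) :=
      .convex_comb (.sup' _ fun j _ => (ih j).add_const _) (.inf' _ fun j _ => (ih j).add_const _)
        (hlam i).1 (hlam i).2
    cases act with
    | false => simpa [ADEPNet.eval, ADEPNet.countAct] using hz
    | true => simpa [ADEPNet.eval, ADEPNet.countAct, pow_succ'] using hz.comp hf hfL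

/-- For an activated DEP-based network whose activation `f` satisfies `0 ≤ f' ≤ s ≤ 1`
almost everywhere, the single output `y` is Lipschitz on `ℝ^d` and almost everywhere its
gradient is componentwise nonnegative with ℓ¹-norm at most `s^L̃ ≤ 1`, where `L̃` is the
number of activated layers. -/
theorem adepnet_lipschitz_grad_nonneg_l1_le (d : ℕ) (f : ℝ → ℝ) (s : ℝ)
    (hs0 : 0 ≤ s) (hs1 : s ≤ 1) (hf : LipschitzWith s.toNNReal f)
    (hf' : ∀ᵐ t ∂volume, 0 ≤ deriv f t ∧ deriv f t ≤ s)
    (net : ADEPNet d 1) :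
    (∃ K : NNReal, LipschitzWith K fun x => net.eval f x 0) ∧
      ∀ᵐ x ∂volume, DifferentiableAt ℝ (fun x => net.eval f x 0) x ∧
        (∀ j, 0 ≤ fderiv ℝ (fun x => net.eval f x 0) x (Pi.single j 1)) ∧
        ∑ j, |fderiv ℝ (fun x => net.eval f x 0) x (Pi.single j 1)| ≤ s ^ net.countAct ∧
        s ^ net.countAct ≤ 1 := by
  have hmono : Monotone f := hf.monotone_of_ae_deriv_nonneg (hf'.mono fun _ ht => ht.1)
  have hnet := net.monotoneShiftBounded_eval hmono hf 0
  rw [Real.coe_toNNReal s hs0] at hnet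
  refine ⟨⟨_, hnet.lipschitzWith⟩, ?_⟩
  filter_upwards [hnet.lipschitzWith.ae_differentiableAt] with x hx
  exact ⟨hx, fun j => hnet.fderiv_nonneg x (Pi.single_nonneg.2 zero_le_one),
    hnet.sum_abs_fderiv_single_le hx, pow_le_one₀ hs0 hs1⟩
end

section
/- Existing DEP-based networks are not universal approximators: for any compact convex B ⊆ ℝ^d with nonempty interior, the class of single-output functions computed by DEP-based networks (possibly activated by functions with derivative bounded in [0,1] a.e.) restricted to B is not dense in C(B) under the sup-norm. -/
open MeasureTheory

/-!
Every layer takes convex combinations of a max and a min of translates of the previous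
outputs, and the activation is 1-Lipschitz, so every network output is 1-Lipschitz for the
sup-norm on `Fin d → ℝ`. A 1-Lipschitz function cannot approximate `x ↦ 2 * x 0` to within
`r / 4` on a ball of radius `r`: along a coordinate segment of length `r / 2` the target moves
by `r`.
-/

namespace LipschitzWith

variable {α : Type*} [PseudoMetricSpace α] {K : NNReal}

theorem finset_sup'_s11 {ι : Type*} {s : Finset ι} (hs : s.Nonempty) {F : ι → α → ℝ}
    (hF : ∀ j ∈ s, LipschitzWith K (F j)) : LipschitzWith K fun x => s.sup' hs (F · x) :=
  .of_le_add_mul K fun x y => Finset.sup'_le _ _ fun j hj =>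
    ((hF j hj).le_add_mul x y).trans (by gcongr; exact Finset.le_sup' (F · y) hj)

theorem finset_inf'_s11 {ι : Type*} {s : Finset ι} (hs : s.Nonempty) {F : ι → α → ℝ}
    (hF : ∀ j ∈ s, LipschitzWith K (F j)) : LipschitzWith K fun x => s.inf' hs (F · x) := by
  refine .of_le_add_mul K fun x y => sub_le_iff_le_add.mp (Finset.le_inf' _ _ fun j hj => ?_)
  have hFj := (hF j hj).le_add_mul x y
  have hinf := Finset.inf'_le (F · x) hj
  linarith

theorem convex_comb {a b : α → ℝ} (ha : LipschitzWith K a) (hb : LipschitzWith K b) {t : ℝ}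
    (ht₀ : 0 ≤ t) (ht₁ : t ≤ 1) : LipschitzWith K fun x => t * a x + (1 - t) * b x := by
  refine .of_le_add_mul K fun x y => ?_
  have hax := mul_le_mul_of_nonneg_left (ha.le_add_mul x y) ht₀
  have hbx := mul_le_mul_of_nonneg_left (hb.le_add_mul x y) (sub_nonneg.mpr ht₁)
  linarith

theorem le_abs_sub_or_le_abs_sub {h g : α → ℝ} (hh : LipschitzWith K h) {x y : α} {ε : ℝ}
    (hxy : K * dist x y + 2 * ε ≤ |g x - g y|) : ε ≤ |h x - g x| ∨ ε ≤ |h y - g y| := by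
  by_contra! hlt
  have hxy' : |h x - h y| ≤ K * dist x y := by
    simpa only [Real.dist_eq] using hh.dist_le_mul x y
  have htriangle : |g x - g y| ≤ |h x - g x| + |h x - h y| + |h y - g y| := by
    calc |g x - g y| = |(h x - h y) - (h x - g x) + (h y - g y)| := by ring_nf
      _ ≤ |(h x - h y) - (h x - g x)| + |h y - g y| := abs_add_le _ _
      _ ≤ |h x - h y| + |h x - g x| + |h y - g y| := by gcongr; exact abs_sub _ _
      _ = _ := by ring
  linarith [hlt.1, hlt.2]

end LipschitzWith

namespace ADEPNet

theorem lipschitzWith_eval {d : ℕ} {f : ℝ → ℝ} (hf : LipschitzWith 1 f) {k : ℕ}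
    (net : ADEPNet d k) (i : Fin k) : LipschitzWith 1 fun x => net.eval f x i := by
  induction net with
  | input => exact LipschitzWith.eval i
  | layer prev act lam hlam w mw ih =>
    have hshift (c : Fin _ → ℝ) (j : Fin _) :
        LipschitzWith 1 fun x => prev.eval f x j + c j := by
      simpa using (ih j).add (LipschitzWith.const (c j))
    have hz : LipschitzWith 1 fun x =>
        lam i * (Finset.univ.sup' Finset.univ_nonempty fun j => prev.eval f x j + w i j) +
          (1 - lam i) *
            (Finset.univ.inf' Finset.univ_nonempty fun j => prev.eval f x j + mw i j) :=
      .convex_comb (.finset_sup' _ fun j _ => hshift (w i) j)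
        (.finset_inf' _ fun j _ => hshift (mw i) j) (hlam i).1 (hlam i).2
    cases act with
    | false => simpa [ADEPNet.eval] using hz
    | true => simpa [ADEPNet.eval, Function.comp_def] using hf.comp hz

theorem width_eq_zero {k : ℕ} (net : ADEPNet 0 k) : k = 0 := by
  induction net with
  | input => rfl
  | layer _ _ _ _ _ _ ih => exact absurd ih (Nat.succ_ne_zero _)

end ADEPNet

theorem depnet_not_universal_general (d : ℕ) (B : Set (Fin d → ℝ))
    (hBint : (interior B).Nonempty) :
    ∃ g : (Fin d → ℝ) → ℝ, ContinuousOn g B ∧ ∃ ε > (0 : ℝ),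
      ∀ (net : ADEPNet d 1) (f : ℝ → ℝ), LipschitzWith 1 f →
        (∀ᵐ t ∂volume, 0 ≤ deriv f t ∧ deriv f t ≤ 1) →
        ∃ x ∈ B, ε ≤ |net.eval f x 0 - g x| := by
  cases d with
  | zero =>
    exact ⟨0, continuousOn_const, 1, one_pos, fun net => absurd net.width_eq_zero one_ne_zero⟩
  | succ n =>
    obtain ⟨x₀, hx₀⟩ := hBint
    obtain ⟨r, hr, hball⟩ := Metric.isOpen_iff.mp isOpen_interior x₀ hx₀
    set y := x₀ + Pi.single 0 (r / 2)
    have hdist : dist y x₀ = r / 2 := by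
      rw [dist_eq_norm, add_sub_cancel_left, Pi.norm_single, Real.norm_of_nonneg (by positivity)]
    have hy : y ∈ B := interior_subset (hball (by rw [Metric.mem_ball, hdist]; linarith))
    refine ⟨fun x => 2 * x 0, (continuous_apply 0).const_mul 2 |>.continuousOn, r / 4,
      by positivity, fun net f hf _ => ?_⟩
    have hrise : 2 * y 0 - 2 * x₀ 0 = r := by simp only [y, Pi.add_apply, Pi.single_eq_same]; ring
    have hgap : (1 : NNReal) * dist y x₀ + 2 * (r / 4) ≤ |2 * y 0 - 2 * x₀ 0| := by
      rw [hrise, abs_of_pos hr, hdist, NNReal.coe_one]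
      linarith
    rcases (net.lipschitzWith_eval hf 0).le_abs_sub_or_le_abs_sub (g := fun x => 2 * x 0) hgap
      with hfar | hfar
    · exact ⟨y, hy, hfar⟩
    · exact ⟨x₀, interior_subset hx₀, hfar⟩

/-- DEP-based networks (possibly activated by a Lipschitz activation whose derivative lies
in `[0, 1]` a.e.) are not universal approximators: on any compact convex `B ⊆ ℝ^d` with
nonempty interior, the class of single-output functions they compute is not dense in `C(B)`
for the sup-norm. -/
theorem depnet_not_universal (d : ℕ) (B : Set (Fin d → ℝ))
    (hBc : IsCompact B) (hBconv : Convex ℝ B) (hBint : (interior B).Nonempty) :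
    ∃ g : (Fin d → ℝ) → ℝ, ContinuousOn g B ∧ ∃ ε > (0 : ℝ),
      ∀ (net : ADEPNet d 1) (f : ℝ → ℝ), LipschitzWith 1 f →
        (∀ᵐ t ∂volume, 0 ≤ deriv f t ∧ deriv f t ≤ 1) →
        ∃ x ∈ B, ε ≤ |net.eval f x 0 - g x| :=
  depnet_not_universal_general d B hBint
end

section
/- Any continuous function on a compact set can be uniformly approximated by a difference of two max-affine functions: the class of functions of the form x ↦ max_{k∈[K]} (a_kᵀx + b_k) − max_{m∈[M]} (c_mᵀx + d_m) (equivalently, max_{k}(a_kᵀx + b_k) + min_{m}(c̃_mᵀx + d̃_m)) is dense under the sup-norm in the class of continuous functions on any compact subset of ℝ^d. -/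
/-! Max-affine functions are closed under `+` and `⊔`, hence their differences form a lattice
of continuous functions: `max (p₁ - q₁) (p₂ - q₂) = max (p₁ + q₂) (p₂ + q₁) - (q₁ + q₂)` and
`min u v = -max (-u) (-v)`. This lattice contains the affine functions, which take arbitrary
prescribed values at any two distinct points, so by the lattice form of the Stone–Weierstrass
theorem it is dense in `C(S, ℝ)` for every compact `S`. -/

open Finset

section FintypeSup

variable {α ι κ : Type*} [Fintype ι] [Fintype κ] [Nonempty ι] [Nonempty κ]

lemma Finset.univ_sup'_comp_equiv [LinearOrder α] (e : ι ≃ κ) (f : κ → α) :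
    (univ.sup' univ_nonempty fun i => f (e i)) = univ.sup' univ_nonempty f :=
  le_antisymm (sup'_le _ _ fun i _ => le_sup' f (mem_univ (e i)))
    (sup'_le _ _ fun j _ => le_sup'_of_le _ (mem_univ (e.symm j)) (by simp))

lemma Finset.univ_sup'_sumElim [LinearOrder α] (u : ι → α) (v : κ → α) :
    univ.sup' univ_nonempty (Sum.elim u v) =
      univ.sup' univ_nonempty u ⊔ univ.sup' univ_nonempty v :=
  le_antisymm
    (sup'_le _ _ fun
      | .inl i, _ => le_sup_of_le_left (le_sup' u (mem_univ i))
      | .inr j, _ => le_sup_of_le_right (le_sup' v (mem_univ j)))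
    (sup_le (sup'_le _ _ fun i _ => le_sup' (Sum.elim u v) (mem_univ (Sum.inl i : ι ⊕ κ)))
      (sup'_le _ _ fun j _ => le_sup' (Sum.elim u v) (mem_univ (Sum.inr j : ι ⊕ κ))))

lemma Finset.univ_sup'_add_univ_sup' [AddCommGroup α] [LinearOrder α] [IsOrderedAddMonoid α]
    (u : ι → α) (v : κ → α) :
    (univ.sup' univ_nonempty fun p : ι × κ => u p.1 + v p.2) =
      univ.sup' univ_nonempty u + univ.sup' univ_nonempty v := by
  have h := sup'_product_left (s := (univ : Finset ι)) (t := (univ : Finset κ))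
    (by simp) (fun p => u p.1 + v p.2)
  simp only [univ_product_univ] at h
  rw [h, sup'_add]
  simp only [add_sup']

end FintypeSup

def IsMaxAffine (d : ℕ) (f : (Fin d → ℝ) → ℝ) : Prop :=
  ∃ (K : ℕ) (a : Fin (K + 1) → Fin d → ℝ) (b : Fin (K + 1) → ℝ),
    f = fun x => univ.sup' univ_nonempty fun k => ∑ i, a k i * x i + b k

namespace IsMaxAffine

variable {d : ℕ} {f g : (Fin d → ℝ) → ℝ}

theorem of_fintype {ι : Type*} [Fintype ι] [Nonempty ι] (a : ι → Fin d → ℝ) (b : ι → ℝ) :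
    IsMaxAffine d fun x => univ.sup' univ_nonempty fun k => ∑ i, a k i * x i + b k := by
  obtain ⟨K, hK⟩ := Nat.exists_eq_succ_of_ne_zero (Fintype.card_ne_zero (α := ι))
  let e : Fin (K + 1) ≃ ι := (finCongr hK.symm).trans (Fintype.equivFin ι).symm
  exact ⟨K, a ∘ e, b ∘ e, funext fun x =>
    (univ_sup'_comp_equiv e fun k => ∑ i, a k i * x i + b k).symm⟩

theorem affine (a : Fin d → ℝ) (b : ℝ) : IsMaxAffine d fun x => ∑ i, a i * x i + b :=
  ⟨0, fun _ => a, fun _ => b, by simp⟩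

theorem add (hf : IsMaxAffine d f) (hg : IsMaxAffine d g) : IsMaxAffine d (f + g) := by
  obtain ⟨K, a, b, rfl⟩ := hf
  obtain ⟨M, c, e, rfl⟩ := hg
  convert of_fintype (fun p : Fin (K + 1) × Fin (M + 1) => a p.1 + c p.2)
    (fun p => b p.1 + e p.2) using 1
  funext x
  rw [Pi.add_apply, ← univ_sup'_add_univ_sup']
  simp only [Pi.add_apply, add_mul, sum_add_distrib, add_add_add_comm]

theorem sup (hf : IsMaxAffine d f) (hg : IsMaxAffine d g) : IsMaxAffine d (f ⊔ g) := by
  obtain ⟨K, a, b, rfl⟩ := hf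
  obtain ⟨M, c, e, rfl⟩ := hg
  convert of_fintype (Sum.elim a c) (Sum.elim b e) using 1
  funext x
  rw [Pi.sup_apply, ← univ_sup'_sumElim]
  congr 1
  ext (k | m) <;> rfl

theorem continuous (hf : IsMaxAffine d f) : Continuous f := by
  obtain ⟨K, a, b, rfl⟩ := hf
  exact Continuous.finset_sup'_apply _ fun k _ => by fun_prop

end IsMaxAffine

def IsMaxAffineDiff (d : ℕ) (f : (Fin d → ℝ) → ℝ) : Prop :=
  ∃ p q, IsMaxAffine d p ∧ IsMaxAffine d q ∧ f = p - q

namespace IsMaxAffineDiff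

variable {d : ℕ} {f g : (Fin d → ℝ) → ℝ}

theorem affine (a : Fin d → ℝ) (b : ℝ) : IsMaxAffineDiff d fun x => ∑ i, a i * x i + b :=
  ⟨_, _, IsMaxAffine.affine a b, IsMaxAffine.affine 0 0, by
    funext x
    simp⟩

theorem continuous (hf : IsMaxAffineDiff d f) : Continuous f := by
  obtain ⟨p, q, hp, hq, rfl⟩ := hf
  exact hp.continuous.sub hq.continuous

theorem neg (hf : IsMaxAffineDiff d f) : IsMaxAffineDiff d (-f) := by
  obtain ⟨p, q, hp, hq, rfl⟩ := hf
  exact ⟨q, p, hq, hp, by simp⟩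

theorem sup (hf : IsMaxAffineDiff d f) (hg : IsMaxAffineDiff d g) :
    IsMaxAffineDiff d (f ⊔ g) := by
  obtain ⟨p₁, q₁, hp₁, hq₁, rfl⟩ := hf
  obtain ⟨p₂, q₂, hp₂, hq₂, rfl⟩ := hg
  refine ⟨(p₁ + q₂) ⊔ (p₂ + q₁), q₁ + q₂, (hp₁.add hq₂).sup (hp₂.add hq₁), hq₁.add hq₂, ?_⟩
  funext x
  simp only [Pi.sup_apply, Pi.sub_apply, Pi.add_apply, ← max_sub_sub_right]
  congr 1 <;> ring

theorem inf (hf : IsMaxAffineDiff d f) (hg : IsMaxAffineDiff d g) :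
    IsMaxAffineDiff d (f ⊓ g) := by
  simpa [neg_sup] using (hf.neg.sup hg.neg).neg

end IsMaxAffineDiff

lemma exists_affine_interpolate {d : ℕ} (x y : Fin d → ℝ) (α β : ℝ) (h : x = y → α = β) :
    ∃ (a : Fin d → ℝ) (b : ℝ), ∑ i, a i * x i + b = α ∧ ∑ i, a i * y i + b = β := by
  by_cases hxy : x = y
  · exact ⟨0, α, by simp, by simp [h hxy]⟩
  obtain ⟨i, hi⟩ := Function.ne_iff.1 hxy
  have hi' : x i - y i ≠ 0 := sub_ne_zero.2 hi
  refine ⟨Pi.single i ((α - β) / (x i - y i)), α - (α - β) / (x i - y i) * x i, ?_, ?_⟩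
  · simp [Pi.single_apply, ite_mul]
  · simp [Pi.single_apply, ite_mul]
    field_simp
    ring

theorem IsMaxAffineDiff.exists_abs_sub_lt {d : ℕ} {S : Set (Fin d → ℝ)} (hS : IsCompact S)
    {g : (Fin d → ℝ) → ℝ} (hg : ContinuousOn g S) {ε : ℝ} (hε : 0 < ε) :
    ∃ f, IsMaxAffineDiff d f ∧ ∀ x ∈ S, |f x - g x| < ε := by
  have := isCompact_iff_compactSpace.mp hS
  let L : Set C(S, ℝ) := {h | ∃ f, IsMaxAffineDiff d f ∧ ∀ x, h x = f x}
  have separates : L.SeparatesPointsStrongly := fun v x y => by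
    obtain ⟨a, b, hx, hy⟩ := exists_affine_interpolate x.1 y.1 (v x) (v y) fun h => by
      rw [Subtype.ext h]
    exact ⟨⟨_, (IsMaxAffineDiff.affine a b).continuous.comp continuous_subtype_val⟩,
      ⟨_, IsMaxAffineDiff.affine a b, fun _ => rfl⟩, hx, hy⟩
  have dense : closure L = ⊤ := by
    refine ContinuousMap.sublattice_closure_eq_top L ?_ ?_ ?_ separates
    · exact ⟨0, _, IsMaxAffineDiff.affine 0 0, fun _ => by simp⟩
    · rintro _ ⟨f₁, hf₁, h₁⟩ _ ⟨f₂, hf₂, h₂⟩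
      exact ⟨_, hf₁.inf hf₂, fun x => by simp [h₁, h₂]⟩
    · rintro _ ⟨f₁, hf₁, h₁⟩ _ ⟨f₂, hf₂, h₂⟩
      exact ⟨_, hf₁.sup hf₂, fun x => by simp [h₁, h₂]⟩
  have hg_mem : (⟨S.domRestrict g, hg.domRestrict⟩ : C(S, ℝ)) ∈ closure L := by
    rw [dense]
    trivial
  obtain ⟨_, ⟨f, hf, hfh⟩, hdist⟩ := Metric.mem_closure_iff.1 hg_mem ε hε
  refine ⟨f, hf, fun x hx => ?_⟩
  have := (ContinuousMap.dist_apply_le_dist ⟨x, hx⟩).trans_lt hdist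
  rwa [hfh, Real.dist_eq, abs_sub_comm] at this

/-- Differences of max-affine functions (equivalently, a max-affine plus a min-affine
function) are dense, for the sup-norm, in the continuous functions on any compact subset
of `ℝ^d`. -/
theorem maxaffine_difference_dense (d : ℕ) (S : Set (Fin d → ℝ)) (hS : IsCompact S)
    (g : (Fin d → ℝ) → ℝ) (hg : ContinuousOn g S) (ε : ℝ) (hε : 0 < ε) :
    ∃ (K M : ℕ) (a : Fin (K + 1) → Fin d → ℝ) (b : Fin (K + 1) → ℝ)
      (c : Fin (M + 1) → Fin d → ℝ) (e : Fin (M + 1) → ℝ),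
      ∀ x ∈ S,
        |((Finset.univ.sup' Finset.univ_nonempty fun k => ∑ i, a k i * x i + b k) -
            (Finset.univ.sup' Finset.univ_nonempty fun m => ∑ i, c m i * x i + e m)) -
          g x| ≤ ε := by
  obtain ⟨_, ⟨p, q, ⟨K, a, b, rfl⟩, ⟨M, c, e, rfl⟩, rfl⟩, hfg⟩ :=
    IsMaxAffineDiff.exists_abs_sub_lt hS hg hε
  exact ⟨K, M, a, b, c, e, fun x hx => (hfg x hx).le⟩
end

section
/- Morphological untangling of the sum of a dilation and an erosion with shared weights: let x ∈ ℝ^d with ‖x‖₁ < C. Define y_i = (max(-C, x_i + C, max_{j≠i} x_j)) + (min(-C, x_i + C, min_{j≠i} x_j)). Then y_i = x_i for every i ∈ [d]. -/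
/-! Since `‖x‖₁ < C`, every coordinate lies in `(-C, C)` and any two of them differ by less
than `C`. Hence in the max term the shifted coordinate `x_i + C` dominates both the bias and
every other `x_j`, while in the min term the bias `-C` lies below every `x_j` and below
`x_i + C`. The sum is `(x_i + C) + (-C) = x_i`. -/

open Finset

section SumAbsBound

variable {ι : Type*} [Fintype ι] {x : ι → ℝ} {C : ℝ}

lemma abs_lt_of_sum_abs_lt (h : ∑ j, |x j| < C) (j : ι) : |x j| < C :=
  (single_le_sum (fun k _ => abs_nonneg (x k)) (mem_univ j)).trans_lt h

lemma add_abs_le_sum_abs [DecidableEq ι] {i j : ι} (hij : i ≠ j) :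
    |x i| + |x j| ≤ ∑ k, |x k| := by
  rw [← sum_pair (f := fun k => |x k|) hij]
  exact sum_le_sum_of_subset_of_nonneg (subset_univ _) fun k _ _ => abs_nonneg (x k)

variable [DecidableEq ι]

lemma add_ite_le_of_sum_abs_lt (h : ∑ j, |x j| < C) (i j : ι) :
    x j + (if j = i then C else 0) ≤ x i + C := by
  by_cases hji : j = i
  · simp [hji]
  · have hpair := add_abs_le_sum_abs (x := x) (Ne.symm hji)
    rw [if_neg hji]
    linarith [le_abs_self (x j), neg_abs_le (x i)]

lemma neg_le_add_ite_of_sum_abs_lt (h : ∑ j, |x j| < C) (i j : ι) :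
    -C ≤ x j + (if j = i then C else 0) := by
  have hj := (abs_lt.mp (abs_lt_of_sum_abs_lt h j)).1
  have hC : 0 ≤ C := (abs_nonneg (x j)).trans (abs_lt_of_sum_abs_lt h j).le
  split_ifs <;> linarith

end SumAbsBound

/-- Morphological untangling: for `‖x‖₁ < C`, the sum of the max-plus unit with bias `-C`,
weight `+C` on coordinate `i` and `0` elsewhere, and the min-plus unit with the same bias
and weights, equals `x i`. That is,
`(max(-C, x_i + C, max_{j≠i} x_j)) + (min(-C, x_i + C, min_{j≠i} x_j)) = x_i`. -/
theorem mpm_untangle (d : ℕ) (x : Fin d → ℝ) (C : ℝ) (h : ∑ j, |x j| < C) (i : Fin d) :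
    max (-C) (Finset.univ.sup' ⟨i, Finset.mem_univ i⟩ fun j =>
        x j + if j = i then C else 0) +
      min (-C) (Finset.univ.inf' ⟨i, Finset.mem_univ i⟩ fun j =>
        x j + if j = i then C else 0) = x i := by
  have hsup : (univ.sup' ⟨i, mem_univ i⟩ fun j => x j + if j = i then C else 0) = x i + C :=
    le_antisymm (sup'_le _ _ fun j _ => add_ite_le_of_sum_abs_lt h i j)
      (by simpa using le_sup' (fun j => x j + if j = i then C else 0) (mem_univ i))
  have hinf : -C ≤ univ.inf' ⟨i, mem_univ i⟩ fun j => x j + if j = i then C else 0 :=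
    le_inf' _ _ fun j _ => neg_le_add_ite_of_sum_abs_lt h i j
  have hbias : -C ≤ x i + C := by simpa using neg_le_add_ite_of_sum_abs_lt h i i
  rw [hsup, max_eq_right hbias, min_eq_left hinf]
  ring
end

section
/- ReLU via an MPM layer: let y ∈ ℝ^N with ‖y‖₁ < C. For each i define x_i = max(C, y_i + C, max_{j≠i} y_j) + min(-C, y_i + C, min_{j≠i} y_j). Then x_i = max(0, y_i) for every i. -/
/-!
Every coordinate satisfies `|y j| < C`. Hence in the max-plus branch the shifted coordinate
`y i + C` and the bias `C` dominate all the unshifted `y j`, giving `C + max 0 (y i)`, while in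
the min-plus branch the bias `-C` lies below every term, so the two branches add up to
`max 0 (y i)`.
-/

namespace Finset

variable {ι α : Type*} [DecidableEq ι] [AddCommGroup α] [LinearOrder α] [IsOrderedAddMonoid α]
  {s : Finset ι} {i : ι} {y : ι → α} {C : α}

theorem max_sup'_add_ite_eq (hi : i ∈ s) (hy : ∀ j ∈ s, j ≠ i → y j ≤ C) :
    max C (s.sup' ⟨i, hi⟩ fun j => y j + if j = i then C else 0) = C + max 0 (y i) := by
  have hle : (s.sup' ⟨i, hi⟩ fun j => y j + if j = i then C else 0) ≤ max C (y i + C) := by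
    refine sup'_le _ _ fun j hj => ?_
    by_cases hji : j = i
    · simp [hji]
    · simpa [hji] using Or.inl (hy j hj hji)
  have hge : y i + C ≤ s.sup' ⟨i, hi⟩ fun j => y j + if j = i then C else 0 := by
    simpa using le_sup' (fun j => y j + if j = i then C else 0) hi
  calc max C (s.sup' ⟨i, hi⟩ fun j => y j + if j = i then C else 0)
      = max C (y i + C) :=
        le_antisymm (max_le (le_max_left _ _) hle) (max_le_max le_rfl hge)
    _ = C + max 0 (y i) := by rw [← max_add_add_left, add_zero, add_comm]

theorem min_inf'_add_ite_eq (hi : i ∈ s) (hC : 0 ≤ C) (hy : ∀ j ∈ s, -C ≤ y j) :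
    min (-C) (s.inf' ⟨i, hi⟩ fun j => y j + if j = i then C else 0) = -C := by
  refine min_eq_left (le_inf' _ _ fun j hj => ?_)
  split_ifs
  · exact (hy j hj).trans (le_add_of_nonneg_right hC)
  · simpa using hy j hj

end Finset

/-- ReLU via an MPM layer: for `‖y‖₁ < C`,
`max(C, y_i + C, max_{j≠i} y_j) + min(-C, y_i + C, min_{j≠i} y_j) = max(0, y_i)`. -/
theorem mpm_relu (N : ℕ) (y : Fin N → ℝ) (C : ℝ) (h : ∑ j, |y j| < C) (i : Fin N) :
    max C (Finset.univ.sup' ⟨i, Finset.mem_univ i⟩ fun j =>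
        y j + if j = i then C else 0) +
      min (-C) (Finset.univ.inf' ⟨i, Finset.mem_univ i⟩ fun j =>
        y j + if j = i then C else 0) = max 0 (y i) := by
  have hy : ∀ j, |y j| < C := fun j =>
    (Finset.single_le_sum (fun k _ => abs_nonneg (y k)) (Finset.mem_univ j)).trans_lt h
  have hC : 0 ≤ C := (abs_nonneg _).trans (hy i).le
  rw [Finset.max_sup'_add_ite_eq (Finset.mem_univ i) fun j _ _ => (le_abs_self _).trans (hy j).le,
    Finset.min_inf'_add_ite_eq (Finset.mem_univ i) hC fun j _ => neg_le_of_abs_le (hy j).le]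
  abel
end
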